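/- For a convex optimization problem minimizing convex f over a convex set C subject to affine equality constraints g(x) = 0, if a Slater point exists (some x ∈ relint C with g(x) = 0) and the optimal value is finite, then strong duality holds: sup_λ q(λ) equals the primal optimal value. -/

import Mathlib

open Finset


/-- A point of the intrinsic interior can be pushed past itself from any point of `C`. -/
private lemma algint_of_mem_intrinsicInterior {n : ℕ} {C : Set (Fin n → ℝ)}
    {x₀ : Fin n → ℝ} (h : x₀ ∈ intrinsicInterior ℝ C) :
    ∀ y ∈ C, ∃ ε : ℝ, 0 < ε ∧ (1 + ε) • x₀ + (-ε) • y ∈ C := by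
  intro y hy
  obtain ⟨z, hz, hzx⟩ := h
  have hx₀span : x₀ ∈ affineSpan ℝ C := by rw [← hzx]; exact z.2
  have hyspan : y ∈ affineSpan ℝ C := subset_affineSpan ℝ C hy
  have hmem : ∀ ε : ℝ, (1 + ε) • x₀ + (-ε) • y ∈ affineSpan ℝ C := by
    intro ε
    have h2 := AffineSubspace.smul_vsub_vadd_mem (affineSpan ℝ C) ε hx₀span hyspan hx₀span
    have : ε • (x₀ -ᵥ y) +ᵥ x₀ = (1 + ε) • x₀ + (-ε) • y := by
      simp only [vsub_eq_sub, vadd_eq_add]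
      module
    rwa [this] at h2
  set γ : ℝ → affineSpan ℝ C := fun ε => ⟨(1 + ε) • x₀ + (-ε) • y, hmem ε⟩ with hγ
  have hcont : Continuous γ := by
    apply Continuous.subtype_mk
    fun_prop
  have hopen : IsOpen (γ ⁻¹' (interior ((↑) ⁻¹' C : Set (affineSpan ℝ C)))) :=
    isOpen_interior.preimage hcont
  have h0 : (0 : ℝ) ∈ γ ⁻¹' (interior ((↑) ⁻¹' C : Set (affineSpan ℝ C))) := by
    have hγ0 : γ 0 = z := by
      apply Subtype.ext
      simp [hγ, ← hzx]
    simpa [hγ0] using hz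
  obtain ⟨δ, hδ, hball⟩ := Metric.isOpen_iff.1 hopen 0 h0
  refine ⟨δ / 2, by positivity, ?_⟩
  have hb : (δ / 2 : ℝ) ∈ Metric.ball (0 : ℝ) δ := by
    simp only [Metric.mem_ball, Real.dist_eq, sub_zero]
    rw [abs_of_pos (by positivity)]
    linarith
  have := interior_subset (s := ((↑) ⁻¹' C : Set (affineSpan ℝ C))) (hball hb)
  exact this


private lemma scalar_step {n : ℕ} {C : Set (Fin n → ℝ)} (hC : Convex ℝ C)
    {F : (Fin n → ℝ) → ℝ} (hF : ConvexOn ℝ C F)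
    (s : (Fin n → ℝ) →ᵃ[ℝ] ℝ) {x₀ : Fin n → ℝ} (hx₀ : x₀ ∈ C)
    (halg : ∀ y ∈ C, ∃ ε : ℝ, 0 < ε ∧ (1 + ε) • x₀ + (-ε) • y ∈ C)
    (hs0 : s x₀ = 0) {p : ℝ}
    (hlb : ∀ x ∈ C, s x = 0 → p ≤ F x) :
    ∃ μ : ℝ, ∀ x ∈ C, p ≤ F x + μ * s x := by
  -- from any point we can produce a point with opposite sign of `s`
  have flip : ∀ y ∈ C, ∃ z ∈ C, ∃ ε : ℝ, 0 < ε ∧ s z = -ε * s y := by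
    intro y hy
    obtain ⟨ε, hε, hmem⟩ := halg y hy
    refine ⟨_, hmem, ε, hε, ?_⟩
    rw [Convex.combo_affine_apply (by ring)]
    simp [hs0]
  by_cases hz : ∀ x ∈ C, s x = 0
  · exact ⟨0, fun x hx => by simpa using hlb x hx (hz x hx)⟩
  push_neg at hz
  obtain ⟨x₁, hx₁, hsx₁⟩ := hz
  -- produce points with positive and negative values of `s`
  have hpos : ∃ a ∈ C, 0 < s a := by
    rcases hsx₁.lt_or_gt with h | h
    · obtain ⟨z, hzC, ε, hε, hsz⟩ := flip x₁ hx₁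
      exact ⟨z, hzC, by nlinarith⟩
    · exact ⟨x₁, hx₁, h⟩
  obtain ⟨a, haC, hsa⟩ := hpos
  have hneg : ∃ b ∈ C, s b < 0 := by
    obtain ⟨z, hzC, ε, hε, hsz⟩ := flip a haC
    exact ⟨z, hzC, by nlinarith⟩
  obtain ⟨b, hbC, hsb⟩ := hneg
  -- the key two-point inequality
  have key : ∀ x ∈ C, 0 < s x → ∀ y ∈ C, s y < 0 →
      (p - F x) / s x ≤ (p - F y) / s y := by
    intro x hx hsx y hy hsy
    have hDpos : 0 < s x - s y := by linarith
    set θ : ℝ := -s y / (s x - s y) with hθdef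
    have hθ0 : 0 ≤ θ := div_nonneg (by linarith) hDpos.le
    have hθ1 : θ ≤ 1 := by
      rw [hθdef, div_le_one hDpos]; linarith
    have hsum : θ + (1 - θ) = 1 := by ring
    have hzC : θ • x + (1 - θ) • y ∈ C := hC hx hy hθ0 (by linarith) hsum
    have hsz : s (θ • x + (1 - θ) • y) = 0 := by
      rw [Convex.combo_affine_apply hsum]
      simp only [smul_eq_mul, hθdef]
      field_simp
      ring
    have h1 : p ≤ F (θ • x + (1 - θ) • y) := hlb _ hzC hsz
    have h2 : F (θ • x + (1 - θ) • y) ≤ θ * F x + (1 - θ) * F y := by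
      simpa [smul_eq_mul] using hF.2 hx hy hθ0 (by linarith) hsum
    have hθD : θ * (s x - s y) = -s y := by
      rw [hθdef]; field_simp
    have h1θD : (1 - θ) * (s x - s y) = s x := by
      rw [hθdef]; field_simp; ring
    have h3 : p * (s x - s y) ≤ (-s y) * F x + s x * F y := by
      have h4 := mul_le_mul_of_nonneg_right (h1.trans h2) hDpos.le
      have h5 : (θ * F x + (1 - θ) * F y) * (s x - s y)
          = F x * (θ * (s x - s y)) + F y * ((1 - θ) * (s x - s y)) := by ring
      rw [h5, hθD, h1θD] at h4
      linarith
    rw [div_le_iff₀ hsx, div_mul_eq_mul_div, le_div_iff_of_neg hsy]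
    nlinarith [h3]
  -- take μ to be the sup of the required lower bounds
  set K : Set ℝ := (fun x => (p - F x) / s x) '' {x ∈ C | 0 < s x} with hK
  have hKne : K.Nonempty := ⟨_, ⟨a, ⟨haC, hsa⟩, rfl⟩⟩
  have hKbdd : BddAbove K := by
    refine ⟨(p - F b) / s b, ?_⟩
    rintro t ⟨x, ⟨hx, hsx⟩, rfl⟩
    exact key x hx hsx b hbC hsb
  refine ⟨sSup K, fun x hx => ?_⟩
  rcases lt_trichotomy (s x) 0 with h | h | h
  · have hμ : sSup K ≤ (p - F x) / s x := by
      refine csSup_le hKne ?_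
      rintro t ⟨w, ⟨hw, hsw⟩, rfl⟩
      exact key w hw hsw x hx h
    have := (le_div_iff_of_neg h).1 hμ
    linarith
  · have := hlb x hx h
    simp [h]; linarith
  · have hμ : (p - F x) / s x ≤ sSup K := le_csSup hKbdd ⟨x, ⟨hx, h⟩, rfl⟩
    have := (div_le_iff₀ h).1 hμ
    linarith

private lemma multiplier_exists {n : ℕ} (m : ℕ) :
    ∀ (C : Set (Fin n → ℝ)), Convex ℝ C →
    ∀ (f : (Fin n → ℝ) → ℝ), ConvexOn ℝ C f →
    ∀ (g : (Fin n → ℝ) →ᵃ[ℝ] (Fin m → ℝ)) (x₀ : Fin n → ℝ), x₀ ∈ C →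
    (∀ y ∈ C, ∃ ε : ℝ, 0 < ε ∧ (1 + ε) • x₀ + (-ε) • y ∈ C) →
    g x₀ = 0 → ∀ (p : ℝ), (∀ x ∈ C, g x = 0 → p ≤ f x) →
    ∃ l : Fin m → ℝ, ∀ x ∈ C, p ≤ f x + ∑ i, l i * g x i := by
  induction m with
  | zero =>
    intro C hC f hf g x₀ hx₀ halg hg0 p hlb
    exact ⟨0, fun x hx => by simpa using hlb x hx (funext fun i => i.elim0)⟩
  | succ m ih =>
    intro C hC f hf g x₀ hx₀ halg hg0 p hlb
    set s : (Fin n → ℝ) →ᵃ[ℝ] ℝ :=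
      ((LinearMap.proj (R := ℝ) (φ := fun _ : Fin (m + 1) => ℝ)
        (Fin.last m)).toAffineMap.comp g) with hs
    set G : (Fin n → ℝ) →ᵃ[ℝ] (Fin m → ℝ) :=
      ((LinearMap.funLeft ℝ ℝ Fin.castSucc).toAffineMap.comp g) with hG
    have hsapp : ∀ x, s x = g x (Fin.last m) := fun x => rfl
    have hGapp : ∀ x i, G x i = g x (Fin.castSucc i) := fun x i => rfl
    set C' : Set (Fin n → ℝ) := {x ∈ C | s x = 0} with hC'def
    have hC'sub : C' ⊆ C := fun x hx => hx.1
    have hC' : Convex ℝ C' := by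
      intro x hx y hy a b ha hb hab
      refine ⟨hC hx.1 hy.1 ha hb hab, ?_⟩
      rw [Convex.combo_affine_apply hab]
      simp [hx.2, hy.2]
    have hs0 : s x₀ = 0 := by rw [hsapp, hg0]; rfl
    have hx₀' : x₀ ∈ C' := ⟨hx₀, hs0⟩
    have halg' : ∀ y ∈ C', ∃ ε : ℝ, 0 < ε ∧ (1 + ε) • x₀ + (-ε) • y ∈ C' := by
      intro y hy
      obtain ⟨ε, hε, hmem⟩ := halg y hy.1
      refine ⟨ε, hε, hmem, ?_⟩
      rw [Convex.combo_affine_apply (by ring)]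
      simp [hs0, hy.2]
    have hG0 : G x₀ = 0 := by
      funext i; rw [hGapp, hg0]; rfl
    have hlb' : ∀ x ∈ C', G x = 0 → p ≤ f x := by
      intro x hx hGx
      refine hlb x hx.1 (funext fun i => ?_)
      refine Fin.lastCases ?_ (fun j => ?_) i
      · exact hx.2
      · exact congrFun hGx j
    obtain ⟨l', hl'⟩ := ih C' hC' f (hf.subset hC'sub hC') G x₀ hx₀' halg' hG0 p hlb'
    -- the partially-penalized objective is convex on C
    set F : (Fin n → ℝ) → ℝ := fun x => f x + ∑ i, l' i * G x i with hF
    have hFconv : ConvexOn ℝ C F := by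
      refine ⟨hC, fun x hx y hy a b ha hb hab => ?_⟩
      have h1 := hf.2 hx hy ha hb hab
      have h2 : G (a • x + b • y) = a • G x + b • G y := Convex.combo_affine_apply hab
      have h3 : ∑ i, l' i * G (a • x + b • y) i
          = a * ∑ i, l' i * G x i + b * ∑ i, l' i * G y i := by
        rw [h2, Finset.mul_sum, Finset.mul_sum, ← Finset.sum_add_distrib]
        refine Finset.sum_congr rfl fun i _ => ?_
        simp only [Pi.add_apply, Pi.smul_apply, smul_eq_mul]
        ring
      simp only [hF, smul_eq_mul] at *
      rw [h3]
      linarith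
    have hlbF : ∀ x ∈ C, s x = 0 → p ≤ F x := fun x hx hsx => hl' x ⟨hx, hsx⟩
    obtain ⟨μ, hμ⟩ := scalar_step hC hFconv s hx₀ halg hs0 hlbF
    refine ⟨Fin.snoc l' μ, fun x hx => ?_⟩
    have := hμ x hx
    rw [Fin.sum_univ_castSucc]
    simp only [Fin.snoc_castSucc, Fin.snoc_last]
    rw [hsapp] at this
    simp only [hF, hGapp] at this
    linarith [this]

/-- Strong duality under a Slater condition: for convex `f` minimized over a
convex set `C` subject to affine equality constraints `g(x) = 0`, if some
Slater point `x ∈ relint C` satisfies `g(x) = 0` and the primal optimal value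
`p` is finite, then `sup_λ q(λ) = p`, where
`q(λ) = inf_{x ∈ C} [f(x) + ⟨λ, g(x)⟩]`. -/
theorem strong_duality_slater
    {n m : ℕ} (C : Set (Fin n → ℝ)) (hCconv : Convex ℝ C)
    (f : (Fin n → ℝ) → ℝ) (hf : ConvexOn ℝ C f)
    (g : (Fin n → ℝ) →ᵃ[ℝ] (Fin m → ℝ))
    (hslater : ∃ x ∈ intrinsicInterior ℝ C, g x = 0)
    (p : ℝ) (hp : IsGLB {y : ℝ | ∃ x ∈ C, g x = 0 ∧ f x = y} p) :
    (⨆ l : Fin m → ℝ, ⨅ x ∈ C, ((f x + ∑ i, l i * g x i : ℝ) : EReal)) =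
      (p : EReal) := by
  obtain ⟨x₀, hx₀i, hg0⟩ := hslater
  have hx₀C : x₀ ∈ C := intrinsicInterior_subset hx₀i
  have halg := algint_of_mem_intrinsicInterior hx₀i
  have hlb : ∀ x ∈ C, g x = 0 → p ≤ f x := fun x hx hgx => hp.1 ⟨x, hx, hgx, rfl⟩
  refine le_antisymm (iSup_le fun l => ?_) ?_
  · -- weak duality
    set q : EReal := ⨅ x ∈ C, ((f x + ∑ i, l i * g x i : ℝ) : EReal) with hq
    have hqle : ∀ x ∈ C, g x = 0 → q ≤ ((f x : ℝ) : EReal) := by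
      intro x hx hgx
      have h1 : q ≤ ((f x + ∑ i, l i * g x i : ℝ) : EReal) := iInf₂_le x hx
      simpa [hgx] using h1
    have hqtop : q ≠ ⊤ := (lt_of_le_of_lt (hqle x₀ hx₀C hg0) (EReal.coe_lt_top _)).ne
    rcases eq_or_ne q ⊥ with hbot | hbot
    · rw [hbot]; exact bot_le
    obtain ⟨r, hr⟩ : ∃ r : ℝ, q = (r : EReal) := ⟨q.toReal, (EReal.coe_toReal hqtop hbot).symm⟩
    rw [hr]
    have hrlb : r ∈ lowerBounds {y : ℝ | ∃ x ∈ C, g x = 0 ∧ f x = y} := by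
      rintro y ⟨x, hx, hgx, rfl⟩
      exact_mod_cast hr ▸ hqle x hx hgx
    exact_mod_cast hp.2 hrlb
  · -- strong duality
    obtain ⟨l, hl⟩ := multiplier_exists m C hCconv f hf g x₀ hx₀C halg hg0 p hlb
    refine le_trans ?_ (le_iSup _ l)
    exact le_iInf₂ fun x hx => by exact_mod_cast hl x hx
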